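/- arXiv:1312.7730 — 2 statements merged into one kernel-verified Lean document; each statement's English description precedes it below -/
import Mathlib

section
/- Let X be a normed space, Ω a nonempty subset of X, and x̄ ∈ Ω. Then the Fréchet subdifferential of the distance function d(·;Ω) at x̄ equals N̂(x̄;Ω) ∩ B*, where N̂(x̄;Ω) is the Fréchet normal cone to Ω at x̄ and B* is the closed unit dual ball. -/
noncomputable section
open Filter Topology

variable {X : Type*} [NormedAddCommGroup X] [NormedSpace ℝ X]

/-- ε-Fréchet subdifferential of g : X → EReal at x₀, as a set of continuous linear functionals. -/
def eFrechetSub (ε : ℝ) (g : X → EReal) (x₀ : X) : Set (X →L[ℝ] ℝ) :=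
  {p | (-(ε : EReal)) ≤ liminf (fun x =>
      (g x - g x₀ - ((p (x - x₀) : ℝ) : EReal)) * ((‖x - x₀‖⁻¹ : ℝ) : EReal)) (𝓝[≠] x₀)}

/-- s-Hölder subdifferential of g at x₀. -/
def holderSub (s : ℝ) (g : X → EReal) (x₀ : X) : Set (X →L[ℝ] ℝ) :=
  {p | (⊥ : EReal) < liminf (fun x =>
      (g x - g x₀ - ((p (x - x₀) : ℝ) : EReal)) * (((‖x - x₀‖ ^ (1 + s))⁻¹ : ℝ) : EReal)) (𝓝[≠] x₀)}

/-- Infimal convolution T(x) = inf_y (φ(y - x) + f(y)). -/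
def infConv (φ f : X → EReal) : X → EReal := fun x => ⨅ y, (φ (y - x) + f y)

/-- Minkowski gauge ρ_F(x) = inf {t ≥ 0 : x ∈ tF}, with inf ∅ = +∞. -/
def gauge' (F : Set X) : X → EReal := fun x =>
  sInf {r : EReal | ∃ t : ℝ, 0 ≤ t ∧ (∃ u ∈ F, x = t • u) ∧ r = (t : EReal)}

open Classical in
def eIndicator (Ω : Set X) : X → EReal := fun x => if x ∈ Ω then (0 : EReal) else ⊤

/-- Convexity for extended-real-valued functions. -/
def ERealConvexOn (g : X → EReal) : Prop :=
  ∀ x y : X, ∀ t : ℝ, 0 ≤ t → t ≤ 1 →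
    g (t • x + (1 - t) • y) ≤ ((t : ℝ) : EReal) * g x + (((1 - t : ℝ)) : EReal) * g y

/-!
Both subdifferentials reduce to one-sided ε-inequalities for `p (x - x₀)` near `x₀`. A Fréchet
subgradient of `d(·;Ω)` is a Fréchet normal because the distance vanishes on `Ω`, and has norm at
most `1` because the distance is bounded by `‖x - x₀‖`. Conversely, for a normal `p` with `‖p‖ ≤ 1`
split `x - x₀ = (x - ω) + (ω - x₀)` with `ω ∈ Ω` almost nearest to `x`: then `p (x - ω)` is at most
about `d(x;Ω)`, and `ω` stays within `3 ‖x - x₀‖` of `x₀`, so the normal-cone inequality makes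
`p (ω - x₀)` small compared with `‖x - x₀‖`.
-/

open Metric

namespace EReal

lemma zero_le_liminf_iff_eventually_neg_le {α : Type*} {l : Filter α} {u : α → EReal} :
    0 ≤ liminf u l ↔ ∀ ε : ℝ, 0 < ε → ∀ᶠ a in l, ((-ε : ℝ) : EReal) ≤ u a := by
  rw [le_liminf_iff']
  refine ⟨fun h ε hε => h _ (by exact_mod_cast neg_neg_of_pos hε), fun h c hc => ?_⟩
  induction c with
  | bot => exact Eventually.of_forall fun _ => bot_le
  | top => exact absurd hc (not_lt.2 le_top)
  | coe c => simpa using h (-c) (neg_pos.2 (by exact_mod_cast hc))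

lemma coe_le_mul_coe_inv_iff {c r : ℝ} (hr : 0 < r) (y : EReal) :
    (c : EReal) ≤ y * ((r⁻¹ : ℝ) : EReal) ↔ ((c * r : ℝ) : EReal) ≤ y := by
  rw [coe_inv, ← div_eq_mul_inv, le_div_iff_mul_le (by exact_mod_cast hr) (coe_ne_top r),
    coe_mul]

end EReal

lemma mem_eFrechetSub_zero_iff {g : X → EReal} {x₀ : X} {p : X →L[ℝ] ℝ} :
    p ∈ eFrechetSub 0 g x₀ ↔ ∀ ε : ℝ, 0 < ε → ∀ᶠ x in 𝓝[≠] x₀,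
      ((-(ε * ‖x - x₀‖) : ℝ) : EReal) ≤ g x - g x₀ - ((p (x - x₀) : ℝ) : EReal) := by
  rw [eFrechetSub, Set.mem_ofPred_eq, EReal.coe_zero, neg_zero,
    EReal.zero_le_liminf_iff_eventually_neg_le]
  refine forall₂_congr fun ε _ => eventually_congr ?_
  filter_upwards [self_mem_nhdsWithin] with x hx
  rw [EReal.coe_le_mul_coe_inv_iff (norm_pos_iff.2 (sub_ne_zero.2 hx)), neg_mul]

lemma iInf_norm_sub_eq_infDist {E : Type*} [SeminormedAddCommGroup E] {Ω : Set E}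
    (hΩ : Ω.Nonempty) (x : E) :
    ⨅ ω : Ω, ((‖x - (ω : E)‖ : ℝ) : EReal) = ((infDist x Ω : ℝ) : EReal) := by
  have : Nonempty Ω := hΩ.to_subtype
  rw [infDist_eq_iInf, Monotone.map_ciInf_of_continuousAt continuous_coe_real_ereal.continuousAt
    EReal.coe_strictMono.monotone ⟨0, by rintro _ ⟨ω, rfl⟩; exact dist_nonneg⟩]
  simp only [dist_eq_norm]

lemma mem_eFrechetSub_infDist_iff {Ω : Set X} {x₀ : X} (hx₀ : x₀ ∈ Ω) {p : X →L[ℝ] ℝ} :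
    p ∈ eFrechetSub 0 (fun x => ⨅ ω : Ω, ((‖x - (ω : X)‖ : ℝ) : EReal)) x₀ ↔
      ∀ ε : ℝ, 0 < ε → ∀ᶠ x in 𝓝 x₀, p (x - x₀) ≤ infDist x Ω + ε * ‖x - x₀‖ := by
  simp only [iInf_norm_sub_eq_infDist ⟨x₀, hx₀⟩, mem_eFrechetSub_zero_iff, infDist_zero_of_mem hx₀,
    ← nhdsNE_sup_pure, eventually_sup, eventually_pure, sub_self, map_zero, norm_zero, mul_zero,
    add_zero, le_refl, and_true, EReal.coe_zero, sub_zero, ← EReal.coe_sub,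
    EReal.coe_le_coe_iff]
  refine forall₂_congr fun ε _ => eventually_congr (Eventually.of_forall fun x => ?_)
  constructor <;> intro h <;> linarith

lemma mem_eFrechetSub_eIndicator_iff {Ω : Set X} {x₀ : X} (hx₀ : x₀ ∈ Ω) {p : X →L[ℝ] ℝ} :
    p ∈ eFrechetSub 0 (eIndicator Ω) x₀ ↔
      ∀ ε : ℝ, 0 < ε → ∀ᶠ x in 𝓝 x₀, x ∈ Ω → p (x - x₀) ≤ ε * ‖x - x₀‖ := by
  simp only [mem_eFrechetSub_zero_iff, ← nhdsNE_sup_pure, eventually_sup, eventually_pure,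
    sub_self, map_zero, norm_zero, mul_zero, le_refl, implies_true, and_true]
  refine forall₂_congr fun ε _ => eventually_congr (Eventually.of_forall fun x => ?_)
  by_cases hx : x ∈ Ω
  · simp only [eIndicator, hx, hx₀, if_true, sub_zero, zero_sub, ← EReal.coe_neg,
      EReal.coe_le_coe_iff, neg_le_neg_iff, true_imp_iff]
  · simp only [eIndicator, hx, hx₀, if_true, if_false, sub_zero, EReal.top_sub_coe, le_top,
      false_imp_iff]

lemma ContinuousLinearMap.norm_le_of_eventually_apply_sub_le {E : Type*}
    [SeminormedAddCommGroup E] [NormedSpace ℝ E] (p : E →L[ℝ] ℝ) {x₀ : E} {C : ℝ} (hC : 0 ≤ C)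
    (h : ∀ᶠ x in 𝓝 x₀, p (x - x₀) ≤ C * ‖x - x₀‖) : ‖p‖ ≤ C := by
  have h0 : ∀ᶠ v in 𝓝 (0 : E), p v ≤ C * ‖v‖ := by
    have : Tendsto (x₀ + ·) (𝓝 0) (𝓝 x₀) := by simpa using (continuous_const_add x₀).tendsto 0
    simpa using this.eventually h
  have hneg : Tendsto (- ·) (𝓝 (0 : E)) (𝓝 0) := by simpa using tendsto_neg (0 : E)
  refine p.opNorm_le_of_nhds_zero hC ?_
  filter_upwards [h0, hneg.eventually h0] with v hv hv'
  rw [map_neg, norm_neg] at hv'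
  rw [Real.norm_eq_abs, abs_le]
  constructor <;> linarith

lemma eventually_apply_sub_le_infDist_add {Ω : Set X} {x₀ : X} (hx₀ : x₀ ∈ Ω) {p : X →L[ℝ] ℝ}
    (hp : ‖p‖ ≤ 1) (hN : ∀ ε : ℝ, 0 < ε → ∀ᶠ x in 𝓝 x₀, x ∈ Ω → p (x - x₀) ≤ ε * ‖x - x₀‖)
    {ε : ℝ} (hε : 0 < ε) : ∀ᶠ x in 𝓝 x₀, p (x - x₀) ≤ infDist x Ω + ε * ‖x - x₀‖ := by
  wlog hε₁ : ε ≤ 1 generalizing ε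
  · filter_upwards [this (lt_min hε one_pos) (min_le_right ε 1)] with x hx
    nlinarith [min_le_left ε 1, norm_nonneg (x - x₀)]
  obtain ⟨r, hr, hΩr⟩ := Metric.eventually_nhds_iff.1 (hN (ε / 4) (by positivity))
  filter_upwards [ball_mem_nhds x₀ (by positivity : 0 < r / 3)] with x hx
  rcases eq_or_ne x x₀ with rfl | hne
  · simp [infDist_nonneg]
  have hn : 0 < ‖x - x₀‖ := norm_pos_iff.2 (sub_ne_zero.2 hne)
  have hx' : ‖x - x₀‖ < r / 3 := by rwa [mem_ball, dist_eq_norm] at hx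
  have hd : infDist x Ω ≤ ‖x - x₀‖ := by simpa [dist_eq_norm] using infDist_le_dist_of_mem hx₀
  obtain ⟨ω, hω, hxω⟩ := (infDist_lt_iff ⟨x₀, hx₀⟩).1
    (lt_add_of_pos_right (infDist x Ω) (by positivity : 0 < ε / 4 * ‖x - x₀‖))
  have hωx₀ : ‖ω - x₀‖ ≤ 3 * ‖x - x₀‖ := by
    have := norm_sub_le_norm_sub_add_norm_sub ω x x₀
    rw [norm_sub_rev ω x, ← dist_eq_norm x ω] at this
    nlinarith [mul_le_mul_of_nonneg_right hε₁ hn.le]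
  have hp' : p (x - ω) ≤ dist x ω :=
    (Real.le_norm_self _).trans ((p.le_opNorm _).trans (by
      rw [dist_eq_norm]; exact mul_le_of_le_one_left (norm_nonneg _) hp))
  calc p (x - x₀) = p (x - ω) + p (ω - x₀) := by rw [← map_add, sub_add_sub_cancel]
    _ ≤ dist x ω + ε / 4 * ‖ω - x₀‖ :=
        add_le_add hp' (hΩr (by rw [dist_eq_norm]; linarith) hω)
    _ ≤ (infDist x Ω + ε / 4 * ‖x - x₀‖) + ε / 4 * (3 * ‖x - x₀‖) := by gcongr
    _ = infDist x Ω + ε * ‖x - x₀‖ := by ring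

theorem stmt13_general (Ω : Set X) (x₀ : X) (hx₀ : x₀ ∈ Ω) :
    eFrechetSub 0 (fun x => ⨅ ω : Ω, ((‖x - (ω : X)‖ : ℝ) : EReal)) x₀
      = eFrechetSub 0 (eIndicator Ω) x₀ ∩ {p | ‖p‖ ≤ 1} := by
  ext p
  rw [Set.mem_inter_iff, Set.mem_ofPred_eq, mem_eFrechetSub_infDist_iff hx₀,
    mem_eFrechetSub_eIndicator_iff hx₀]
  constructor
  · intro h
    refine ⟨fun ε hε => (h ε hε).mono fun x hx hxΩ => by simpa [infDist_zero_of_mem hxΩ] using hx,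
      le_of_forall_pos_le_add fun ε hε => ?_⟩
    refine p.norm_le_of_eventually_apply_sub_le (x₀ := x₀) (by positivity) ?_
    filter_upwards [h ε hε] with x hx
    linarith [infDist_le_dist_of_mem hx₀ (x := x), dist_eq_norm x x₀]
  · rintro ⟨hN, hp⟩ ε hε
    exact eventually_apply_sub_le_infDist_add hx₀ hp hN hε

theorem stmt13 (Ω : Set X) (hΩ : Ω.Nonempty) (x₀ : X) (hx₀ : x₀ ∈ Ω) :
    eFrechetSub 0 (fun x => ⨅ ω : Ω, ((‖x - (ω : X)‖ : ℝ) : EReal)) x₀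
      = eFrechetSub 0 (eIndicator Ω) x₀ ∩ {p | ‖p‖ ≤ 1} :=
  stmt13_general Ω x₀ hx₀
end
end

section
/- Let X be a normed space, F a nonempty closed bounded convex subset with F ≠ {0}, f: X → (-∞,∞] center-Lipschitz on dom f at x̄ with constant ℓ, 0 ≤ ℓ < ‖F‖^{-1}, and T(x) = inf{ρ_F(y−x)+f(y) : y ∈ X} with T(x̄) = f(x̄) finite. Then for every s > 0, ∂_s T(x̄) = ∂_s f(x̄) ∩ {x* ∈ X* : sup_{u∈F} ⟨−x*, u⟩ ≤ 1}. -/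
noncomputable section
open Filter Topology

variable {X : Type*} [NormedAddCommGroup X] [NormedSpace ℝ X]

/-! With `T := infConv (gauge' F) f`, the inclusion `⊆` comes from `T ≤ f` (equality at `x₀`) and
from the competitor `y = x₀`: `T (x₀ - t • u) ≤ t + f x₀` for `u ∈ F`, so a Hölder minorant of `T`
forces `-p u ≤ 1 + O(t ^ s)` as `t → 0⁺`. For `⊇`, split the infimum defining `T x` according to
whether `‖y - x₀‖ ≤ c ‖x - x₀‖`: near points are handled by the Hölder minorant of `f` and
`ρ_F ≥ -p`, far points by `ρ_F ≥ ‖·‖ / ‖F‖` and the center-Lipschitz bound, because `ℓ < ‖F‖⁻¹`. -/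

lemma le_gauge'_of_forall_smul {F : Set X} {v : X} {c : ℝ}
    (h : ∀ t : ℝ, 0 ≤ t → ∀ u ∈ F, v = t • u → c ≤ t) : (c : EReal) ≤ gauge' F v := by
  refine le_sInf ?_
  rintro r ⟨t, ht, ⟨u, hu, rfl⟩, rfl⟩
  exact EReal.coe_le_coe_iff.mpr (h t ht u hu rfl)

lemma gauge'_smul_le {F : Set X} {t : ℝ} (ht : 0 ≤ t) {u : X} (hu : u ∈ F) :
    gauge' F (t • u) ≤ (t : EReal) :=
  sInf_le ⟨t, ht, ⟨u, hu, rfl⟩, rfl⟩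

lemma gauge'_zero_nonpos {F : Set X} (hF : F.Nonempty) : gauge' F 0 ≤ 0 := by
  obtain ⟨u, hu⟩ := hF
  simpa using gauge'_smul_le le_rfl hu

lemma inv_mul_norm_le_gauge' {F : Set X} {M : ℝ} (hM : ∀ u ∈ F, ‖u‖ ≤ M) (v : X) :
    ((M⁻¹ * ‖v‖ : ℝ) : EReal) ≤ gauge' F v := by
  refine le_gauge'_of_forall_smul fun t ht u hu hv => ?_
  have hu1 : M⁻¹ * ‖u‖ ≤ 1 := inv_mul_le_one_of_le₀ (hM u hu) ((norm_nonneg u).trans (hM u hu))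
  calc M⁻¹ * ‖v‖ = t * (M⁻¹ * ‖u‖) := by
        rw [hv, norm_smul, Real.norm_of_nonneg ht]; ring
    _ ≤ t := mul_le_of_le_one_right ht hu1

lemma neg_apply_le_gauge' {F : Set X} {p : X →L[ℝ] ℝ} (hp : ∀ u ∈ F, -p u ≤ 1) (v : X) :
    ((-p v : ℝ) : EReal) ≤ gauge' F v := by
  refine le_gauge'_of_forall_smul fun t ht u hu hv => ?_
  rw [hv, map_smul, smul_eq_mul, ← mul_neg]
  exact mul_le_of_le_one_right ht (hp u hu)

lemma infConv_le {E : Type*} [NormedAddCommGroup E] (φ f : E → EReal) (x y : E) :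
    infConv φ f x ≤ φ (y - x) + f y :=
  iInf_le _ y

lemma le_infConv {E : Type*} [NormedAddCommGroup E] {φ f : E → EReal} {x : E} {c : EReal}
    (h : ∀ y, c ≤ φ (y - x) + f y) : c ≤ infConv φ f x :=
  le_iInf h

lemma infConv_le_self {E : Type*} [NormedAddCommGroup E] {φ : E → EReal} (hφ : φ 0 ≤ 0)
    (f : E → EReal) (x : E) : infConv φ f x ≤ f x := by
  have h := infConv_le φ f x x
  rw [sub_self] at h
  simpa using h.trans (add_le_add_left hφ (f x))

lemma EReal.coe_sub_le_of_abs_toReal_sub_le {a : EReal} {A B : ℝ} (ha : a ≠ ⊥)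
    (h : a ≠ ⊤ → |a.toReal - A| ≤ B) : ((A - B : ℝ) : EReal) ≤ a := by
  by_cases htop : a = ⊤
  · simp [htop]
  · rw [← EReal.coe_toReal htop ha, EReal.coe_le_coe_iff]
    linarith [(abs_le.mp (h htop)).1]

lemma EReal.coe_le_mul_coe_inv_iff_s17 {D : EReal} {r b : ℝ} (hb : 0 < b) :
    (r : EReal) ≤ D * ((b⁻¹ : ℝ) : EReal) ↔ ((r * b : ℝ) : EReal) ≤ D := by
  induction D with
  | bot =>
    simp only [EReal.bot_mul_of_pos (EReal.coe_pos.mpr (inv_pos.mpr hb)), le_bot_iff,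
      EReal.coe_ne_bot]
  | coe d =>
    rw [← EReal.coe_mul, EReal.coe_le_coe_iff, EReal.coe_le_coe_iff, ← div_eq_mul_inv,
      le_div_iff₀ hb]
  | top => simp [EReal.top_mul_of_pos (EReal.coe_pos.mpr (inv_pos.mpr hb))]

lemma EReal.coe_le_sub_sub_iff {a : EReal} {r b c : ℝ} :
    (r : EReal) ≤ a - b - c ↔ ((b + c + r : ℝ) : EReal) ≤ a := by
  induction a with
  | bot => simp
  | coe a => norm_cast; constructor <;> intro h <;> linarith
  | top => simp

lemma EReal.bot_lt_liminf_iff {α : Type*} {l : Filter α} {u : α → EReal} :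
    ⊥ < liminf u l ↔ ∃ r : ℝ, ∀ᶠ x in l, (r : EReal) ≤ u x := by
  constructor
  · intro h
    obtain ⟨r, -, hr⟩ := EReal.exists_between_coe_real h
    exact ⟨r, (eventually_lt_of_lt_liminf hr).mono fun x hx => hx.le⟩
  · rintro ⟨r, hr⟩
    exact (EReal.bot_lt_coe r).trans_le (le_liminf_of_le (by isBoundedDefault) hr)

lemma mem_holderSub_iff {s : ℝ} {g : X → EReal} {x₀ : X} {A : ℝ} (hA : g x₀ = A)
    {p : X →L[ℝ] ℝ} :
    p ∈ holderSub s g x₀ ↔ ∃ r : ℝ, ∀ᶠ x in 𝓝[≠] x₀,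
      ((A + p (x - x₀) + r * ‖x - x₀‖ ^ (1 + s) : ℝ) : EReal) ≤ g x := by
  refine EReal.bot_lt_liminf_iff.trans (exists_congr fun r => eventually_congr ?_)
  filter_upwards [self_mem_nhdsWithin] with x hx
  have hb : 0 < ‖x - x₀‖ ^ (1 + s) := Real.rpow_pos_of_pos (norm_sub_pos_iff.mpr hx) _
  rw [EReal.coe_le_mul_coe_inv_iff_s17 hb, hA, EReal.coe_le_sub_sub_iff]

lemma holderSub_mono {s : ℝ} {g h : X → EReal} {x₀ : X} (hle : g ≤ h) (heq : g x₀ = h x₀) :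
    holderSub s g x₀ ⊆ holderSub s h x₀ := fun p hp =>
  hp.trans_le <| liminf_le_liminf <| Eventually.of_forall fun x =>
    mul_le_mul_of_nonneg_right
      (heq ▸ EReal.sub_le_sub (EReal.sub_le_sub (hle x) le_rfl) le_rfl)
      (EReal.coe_nonneg.mpr (by positivity))

lemma neg_apply_le_one_of_mem_holderSub_infConv {F : Set X} {f : X → EReal} {x₀ : X}
    {A s : ℝ} (hs : 0 < s) (hT : infConv (gauge' F) f x₀ = A) (hA : f x₀ = A)
    {p : X →L[ℝ] ℝ} (hp : p ∈ holderSub s (infConv (gauge' F) f) x₀) {u : X} (hu : u ∈ F) :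
    -p u ≤ 1 := by
  rcases eq_or_ne u 0 with rfl | hu0
  · simp
  obtain ⟨r, hr⟩ := (mem_holderSub_iff hT).1 hp
  have hcurve : Tendsto (fun t : ℝ => x₀ - t • u) (𝓝[>] 0) (𝓝[≠] x₀) := by
    refine tendsto_nhdsWithin_iff.2 ⟨?_, ?_⟩
    · have hc : Continuous fun t : ℝ => x₀ - t • u := by fun_prop
      exact tendsto_nhdsWithin_of_tendsto_nhds (hc.tendsto' 0 x₀ (by simp))
    · filter_upwards [self_mem_nhdsWithin] with t (ht : 0 < t)
      simpa [sub_eq_self] using ⟨ht.ne', hu0⟩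
  have hbound : ∀ᶠ t in 𝓝[>] (0 : ℝ), -p u + r * (t ^ s * ‖u‖ ^ (1 + s)) ≤ 1 := by
    filter_upwards [hcurve.eventually hr, self_mem_nhdsWithin] with t hle (ht : 0 < t)
    have hT_le : infConv (gauge' F) f (x₀ - t • u) ≤ ((t + A : ℝ) : EReal) := by
      calc infConv (gauge' F) f (x₀ - t • u) ≤ gauge' F (t • u) + f x₀ := by
            simpa using infConv_le (gauge' F) f (x₀ - t • u) x₀
        _ ≤ (t : EReal) + A := by rw [hA]; exact add_le_add_left (gauge'_smul_le ht.le hu) _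
        _ = ((t + A : ℝ) : EReal) := rfl
    have key := EReal.coe_le_coe_iff.mp (hle.trans hT_le)
    simp only [sub_sub_cancel_left, map_neg, map_smul, smul_eq_mul, norm_neg, norm_smul,
      Real.norm_of_nonneg ht.le, Real.mul_rpow ht.le (norm_nonneg u),
      Real.rpow_add ht, Real.rpow_one] at key
    nlinarith
  have hlim : Tendsto (fun t : ℝ => -p u + r * (t ^ s * ‖u‖ ^ (1 + s))) (𝓝[>] 0) (𝓝 (-p u)) := by
    have h0 : Tendsto (fun t : ℝ => t ^ s) (𝓝[>] 0) (𝓝 0) := by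
      simpa [Real.zero_rpow hs.ne'] using
        (Real.continuousAt_rpow_const 0 s (Or.inr hs.le)).tendsto.mono_left nhdsWithin_le_nhds
    simpa using ((h0.mul_const (‖u‖ ^ (1 + s))).const_mul r).const_add (-p u)
  exact le_of_tendsto hlim hbound

lemma exists_le_infConv_of_mem_holderSub {φ f : X → EReal} {x₀ : X} {A ℓ κ s : ℝ}
    {p : X →L[ℝ] ℝ} (hs : 0 ≤ 1 + s) (hκ : 0 ≤ κ) (hℓκ : ℓ < κ)
    (hφp : ∀ v, ((-p v : ℝ) : EReal) ≤ φ v) (hφκ : ∀ v, ((κ * ‖v‖ : ℝ) : EReal) ≤ φ v)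
    (hA : f x₀ = A) (hf : ∀ y, ((A - ℓ * ‖y - x₀‖ : ℝ) : EReal) ≤ f y)
    (hp : p ∈ holderSub s f x₀) :
    ∃ K : ℝ, ∀ᶠ x in 𝓝[≠] x₀,
      ((A + p (x - x₀) + K * ‖x - x₀‖ ^ (1 + s) : ℝ) : EReal) ≤ infConv φ f x := by
  obtain ⟨r, hr⟩ := (mem_holderSub_iff hA).1 hp
  set r₀ := min r 0
  obtain ⟨δ, hδ, hnear⟩ : ∃ δ > 0, ∀ y, ‖y - x₀‖ < δ →
      ((A + p (y - x₀) + r₀ * ‖y - x₀‖ ^ (1 + s) : ℝ) : EReal) ≤ f y := by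
    obtain ⟨δ, hδ, hball⟩ := Metric.eventually_nhds_iff.1 (eventually_nhdsWithin_iff.1 hr)
    refine ⟨δ, hδ, fun y hy => ?_⟩
    have hr₀ : r₀ * ‖y - x₀‖ ^ (1 + s) ≤ r * ‖y - x₀‖ ^ (1 + s) :=
      mul_le_mul_of_nonneg_right (min_le_left r 0) (by positivity)
    rcases eq_or_ne y x₀ with rfl | hy₀
    · rw [hA, sub_self, map_zero, add_zero, EReal.coe_le_coe_iff]
      exact add_le_of_nonpos_right
        (mul_nonpos_of_nonpos_of_nonneg (min_le_right r 0) (by positivity))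
    · refine le_trans ?_ (hball (by rwa [dist_eq_norm]) hy₀)
      exact EReal.coe_le_coe_iff.2 (by linarith)
  -- far from `x₀` the growth `(κ - ℓ) ‖y - x₀‖` dominates, so `c` balances `κ + ‖p‖`
  set c := (κ + ‖p‖) / (κ - ℓ)
  have hc : 0 ≤ c := div_nonneg (by positivity) (sub_pos.2 hℓκ).le
  refine ⟨r₀ * c ^ (1 + s), ?_⟩
  have hxδ : ∀ᶠ x in 𝓝 x₀, c * ‖x - x₀‖ < δ :=
    Tendsto.eventually_lt_const hδ (by simpa using (tendsto_norm_sub_self x₀).const_mul c)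
  filter_upwards [nhdsWithin_le_nhds hxδ] with x hx
  refine le_infConv fun y => ?_
  have hlin : p (x - x₀) = -p (y - x) + p (y - x₀) := by
    rw [← map_neg, ← map_add]; congr 1; abel
  have hK : r₀ * c ^ (1 + s) * ‖x - x₀‖ ^ (1 + s) ≤ 0 :=
    mul_nonpos_of_nonpos_of_nonneg
      (mul_nonpos_of_nonpos_of_nonneg (min_le_right r 0) (by positivity)) (by positivity)
  rcases le_or_gt ‖y - x₀‖ (c * ‖x - x₀‖) with hy | hy
  · refine le_trans ?_ (add_le_add (hφp (y - x)) (hnear y (hy.trans_lt hx)))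
    rw [← EReal.coe_add, EReal.coe_le_coe_iff]
    have hpow : ‖y - x₀‖ ^ (1 + s) ≤ c ^ (1 + s) * ‖x - x₀‖ ^ (1 + s) := by
      rw [← Real.mul_rpow hc (norm_nonneg _)]
      exact Real.rpow_le_rpow (norm_nonneg _) hy hs
    nlinarith [mul_le_mul_of_nonpos_left hpow (min_le_right r 0)]
  · refine le_trans ?_ (add_le_add (hφκ (y - x)) (hf y))
    rw [← EReal.coe_add, EReal.coe_le_coe_iff]
    have htri : ‖y - x₀‖ - ‖x - x₀‖ ≤ ‖y - x‖ := by
      simpa using norm_sub_norm_le (y - x₀) (x - x₀)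
    have hpx : p (x - x₀) ≤ ‖p‖ * ‖x - x₀‖ := (le_abs_self _).trans (p.le_opNorm _)
    have hfar : (κ + ‖p‖) * ‖x - x₀‖ ≤ (κ - ℓ) * ‖y - x₀‖ := by
      calc (κ + ‖p‖) * ‖x - x₀‖ = (κ - ℓ) * (c * ‖x - x₀‖) := by
            simp only [c]; field_simp [(sub_pos.2 hℓκ).ne']
        _ ≤ (κ - ℓ) * ‖y - x₀‖ := mul_le_mul_of_nonneg_left hy.le (sub_pos.2 hℓκ).le
    nlinarith [mul_le_mul_of_nonneg_left htri hκ]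

theorem stmt17_general (F : Set X) (hne : F.Nonempty)
    (hbd : Bornology.IsBounded F)
    (f : X → EReal) (hfbot : ∀ x, f x ≠ ⊥)
    (x₀ : X) (ℓ : ℝ) (hℓm : ℓ < (sSup ((fun u => ‖u‖) '' F))⁻¹)
    (hlip : ∀ x : X, f x ≠ ⊤ → |(f x).toReal - (f x₀).toReal| ≤ ℓ * ‖x - x₀‖)
    (hdom : infConv (gauge' F) f x₀ ≠ ⊤) (hS : infConv (gauge' F) f x₀ = f x₀) :
    ∀ s : ℝ, 0 < s →
      holderSub s (infConv (gauge' F) f) x₀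
        = holderSub s f x₀ ∩ {p : X →L[ℝ] ℝ | ∀ u ∈ F, -p u ≤ 1} := by
  intro s hs
  set M := sSup ((fun u => ‖u‖) '' F)
  have hFM : ∀ u ∈ F, ‖u‖ ≤ M := by
    obtain ⟨C, hC⟩ := isBounded_iff_forall_norm_le.1 hbd
    exact fun u hu => le_csSup ⟨C, Set.forall_mem_image.2 hC⟩ ⟨u, hu, rfl⟩
  have hM : 0 ≤ M⁻¹ := inv_nonneg.2 (Real.sSup_nonneg (by simp))
  set A := (f x₀).toReal
  have hA : f x₀ = A := (EReal.coe_toReal (hS ▸ hdom) (hfbot x₀)).symm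
  have hf : ∀ y, ((A - ℓ * ‖y - x₀‖ : ℝ) : EReal) ≤ f y := fun y =>
    EReal.coe_sub_le_of_abs_toReal_sub_le (hfbot y) (hlip y)
  ext p
  refine ⟨fun hp => ⟨holderSub_mono (infConv_le_self (gauge'_zero_nonpos hne) f) hS hp,
    fun u hu => neg_apply_le_one_of_mem_holderSub_infConv hs (hS.trans hA) hA hp hu⟩, ?_⟩
  rintro ⟨hpf, hpF⟩
  exact (mem_holderSub_iff (hS.trans hA)).2 <|
    exists_le_infConv_of_mem_holderSub (by linarith) hM hℓm (neg_apply_le_gauge' hpF)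
      (inv_mul_norm_le_gauge' hFM) hA hf hpf

theorem stmt17 (F : Set X) (hne : F.Nonempty) (hcl : IsClosed F)
    (hbd : Bornology.IsBounded F) (hconv : Convex ℝ F) (hnz : F ≠ {0})
    (f : X → EReal) (hfbot : ∀ x, f x ≠ ⊥)
    (x₀ : X) (ℓ : ℝ) (hℓ0 : 0 ≤ ℓ) (hℓm : ℓ < (sSup ((fun u => ‖u‖) '' F))⁻¹)
    (hlip : ∀ x : X, f x ≠ ⊤ → |(f x).toReal - (f x₀).toReal| ≤ ℓ * ‖x - x₀‖)
    (hdom : infConv (gauge' F) f x₀ ≠ ⊤) (hS : infConv (gauge' F) f x₀ = f x₀) :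
    ∀ s : ℝ, 0 < s →
      holderSub s (infConv (gauge' F) f) x₀
        = holderSub s f x₀ ∩ {p : X →L[ℝ] ℝ | ∀ u ∈ F, -p u ≤ 1} :=
  stmt17_general F hne hbd f hfbot x₀ ℓ hℓm hlip hdom hS
end
end
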